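/- arXiv:gr-qc/0506131 — 4 statements merged into one kernel-verified Lean document; each statement's English description precedes it below -/
import Mathlib

section
/- Let λ, μ be C¹ and φ be C² on an open subset of (0,∞)×ℝ, and suppose the wave equation (W) holds there. Define D⁺ = e^{−μ}∂_t + e^{−λ}∂_r, D⁻ = e^{−μ}∂_t − e^{−λ}∂_r, X = φ̇e^{−μ} − φ′e^{−λ}, Y = φ̇e^{−μ} + φ′e^{−λ}, a = (−λ̇ − 1/t)e^{−μ} − μ′e^{−λ}, b = −e^{−μ}/t, c = (−λ̇ − 1/t)e^{−μ} + μ′e^{−λ}. Then D⁺X = aX + bY and D⁻Y = bX + cY. -/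
open Real MeasureTheory Set Filter

noncomputable section

/-- Partial derivative with respect to the first (time) variable. -/
def pt (u : ℝ → ℝ → ℝ) (t r : ℝ) : ℝ := deriv (fun s => u s r) t

/-- Partial derivative with respect to the second (space) variable. -/
def pr (u : ℝ → ℝ → ℝ) (t r : ℝ) : ℝ := deriv (fun s => u t s) r

/-- Second partial derivative in time. -/
def ptt (u : ℝ → ℝ → ℝ) (t r : ℝ) : ℝ := deriv (fun s => pt u s r) t

/-- Second partial derivative in space. -/
def prr (u : ℝ → ℝ → ℝ) (t r : ℝ) : ℝ := deriv (fun s => pr u t s) r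

/-- Vlasov contribution to the energy density. -/
def vRho (f : ℝ → ℝ → ℝ → ℝ → ℝ) (t r : ℝ) : ℝ :=
  (π / t ^ 2) * ∫ w : ℝ, ∫ F in Ioi (0 : ℝ), Real.sqrt (1 + w ^ 2 + F / t ^ 2) * f t r w F

/-- Vlasov contribution to the radial pressure. -/
def vP (f : ℝ → ℝ → ℝ → ℝ → ℝ) (t r : ℝ) : ℝ :=
  (π / t ^ 2) * ∫ w : ℝ, ∫ F in Ioi (0 : ℝ),
    (w ^ 2 / Real.sqrt (1 + w ^ 2 + F / t ^ 2)) * f t r w F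

/-- Vlasov contribution to the momentum density. -/
def vJ (f : ℝ → ℝ → ℝ → ℝ → ℝ) (t r : ℝ) : ℝ :=
  (π / t ^ 2) * ∫ w : ℝ, ∫ F in Ioi (0 : ℝ), w * f t r w F

/-- Energy density ρ of the Einstein-Vlasov-scalar field system. -/
def rho (f : ℝ → ℝ → ℝ → ℝ → ℝ) (lam mu phi : ℝ → ℝ → ℝ) (t r : ℝ) : ℝ :=
  vRho f t r + (1 / 2) * (Real.exp (-(2 * mu t r)) * (pt phi t r) ^ 2
    + Real.exp (-(2 * lam t r)) * (pr phi t r) ^ 2)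

/-- Radial pressure p of the Einstein-Vlasov-scalar field system. -/
def pres (f : ℝ → ℝ → ℝ → ℝ → ℝ) (lam mu phi : ℝ → ℝ → ℝ) (t r : ℝ) : ℝ :=
  vP f t r + (1 / 2) * (Real.exp (-(2 * mu t r)) * (pt phi t r) ^ 2
    + Real.exp (-(2 * lam t r)) * (pr phi t r) ^ 2)

/-- Momentum density j of the Einstein-Vlasov-scalar field system. -/
def mom (f : ℝ → ℝ → ℝ → ℝ → ℝ) (lam mu phi : ℝ → ℝ → ℝ) (t r : ℝ) : ℝ :=
  vJ f t r - Real.exp (-(lam t r + mu t r)) * pt phi t r * pr phi t r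

/-- A regular solution of the surface-symmetric Einstein-Vlasov-scalar field system
with curvature parameter `k` on the time interval `I ⊆ (0,∞)`. -/
structure IsRegularSolution (k : ℝ) (f : ℝ → ℝ → ℝ → ℝ → ℝ) (lam mu phi : ℝ → ℝ → ℝ)
    (I : Set ℝ) : Prop where
  f_contDiff : ContDiffOn ℝ 1 (fun q : ℝ × ℝ × ℝ × ℝ => f q.1 q.2.1 q.2.2.1 q.2.2.2)
    {q : ℝ × ℝ × ℝ × ℝ | q.1 ∈ I ∧ 0 ≤ q.2.2.2}
  f_nonneg : ∀ t ∈ I, ∀ (r w F : ℝ), 0 ≤ f t r w F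
  f_periodic : ∀ (t r w F : ℝ), f t (r + 1) w F = f t r w F
  supp_bounded : ∀ a ∈ I, ∀ b ∈ I, ∃ C : ℝ, ∀ t ∈ Icc a b, ∀ (r w F : ℝ),
    f t r w F ≠ 0 → |w| ≤ C ∧ F ≤ C
  lam_contDiff : ContDiffOn ℝ 1 (fun q : ℝ × ℝ => lam q.1 q.2) (I ×ˢ (univ : Set ℝ))
  mu_contDiff : ContDiffOn ℝ 2 (fun q : ℝ × ℝ => mu q.1 q.2) (I ×ˢ (univ : Set ℝ))
  phi_contDiff : ContDiffOn ℝ 2 (fun q : ℝ × ℝ => phi q.1 q.2) (I ×ˢ (univ : Set ℝ))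
  lam_periodic : ∀ (t r : ℝ), lam t (r + 1) = lam t r
  mu_periodic : ∀ (t r : ℝ), mu t (r + 1) = mu t r
  phi_periodic : ∀ (t r : ℝ), phi t (r + 1) = phi t r
  /-- (V): the Vlasov equation. -/
  eqV : ∀ t ∈ I, ∀ (r w F : ℝ), 0 ≤ F →
    deriv (fun s => f s r w F) t
      + (Real.exp (mu t r - lam t r) * w / Real.sqrt (1 + w ^ 2 + F / t ^ 2))
          * deriv (fun s => f t s w F) r
      - (pt lam t r * w + Real.exp (mu t r - lam t r) * pr mu t r
          * Real.sqrt (1 + w ^ 2 + F / t ^ 2)) * deriv (fun s => f t r s F) w = 0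
  /-- (E1). -/
  eqE1 : ∀ t ∈ I, ∀ r : ℝ,
    Real.exp (-(2 * mu t r)) * (2 * t * pt lam t r + 1) + k
      = 8 * π * t ^ 2 * rho f lam mu phi t r
  /-- (E2). -/
  eqE2 : ∀ t ∈ I, ∀ r : ℝ,
    Real.exp (-(2 * mu t r)) * (2 * t * pt mu t r - 1) - k
      = 8 * π * t ^ 2 * pres f lam mu phi t r
  /-- (E3). -/
  eqE3 : ∀ t ∈ I, ∀ r : ℝ,
    pr mu t r = -(4 * π * t) * Real.exp (lam t r + mu t r) * mom f lam mu phi t r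
  /-- (W): the wave equation for the scalar field. -/
  eqW : ∀ t ∈ I, ∀ r : ℝ,
    Real.exp (-(2 * lam t r)) * prr phi t r - Real.exp (-(2 * mu t r)) * ptt phi t r
      - Real.exp (-(2 * mu t r)) * (pt lam t r - pt mu t r + 2 / t) * pt phi t r
      - Real.exp (-(2 * lam t r)) * (pr lam t r - pr mu t r) * pr phi t r = 0

/-- Admissible initial data at `t = 1` for the surface-symmetric
Einstein-Vlasov-scalar field system. -/
structure IsInitialData (f0 : ℝ → ℝ → ℝ → ℝ) (lam0 mu0 phi0 psi : ℝ → ℝ) : Prop where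
  f0_contDiff : ContDiffOn ℝ 1 (fun q : ℝ × ℝ × ℝ => f0 q.1 q.2.1 q.2.2)
    {q : ℝ × ℝ × ℝ | 0 ≤ q.2.2}
  f0_nonneg : ∀ (r w F : ℝ), 0 ≤ f0 r w F
  f0_periodic : ∀ (r w F : ℝ), f0 (r + 1) w F = f0 r w F
  f0_supp : ∃ C : ℝ, ∀ (r w F : ℝ), f0 r w F ≠ 0 → |w| ≤ C ∧ F ≤ C
  lam0_C1 : ContDiff ℝ 1 lam0
  psi_C1 : ContDiff ℝ 1 psi
  mu0_C2 : ContDiff ℝ 2 mu0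
  phi0_C2 : ContDiff ℝ 2 phi0
  lam0_periodic : ∀ r : ℝ, lam0 (r + 1) = lam0 r
  mu0_periodic : ∀ r : ℝ, mu0 (r + 1) = mu0 r
  phi0_periodic : ∀ r : ℝ, phi0 (r + 1) = phi0 r
  psi_periodic : ∀ r : ℝ, psi (r + 1) = psi r
  /-- The constraint (E3) holds at `t = 1`. -/
  constraint : ∀ r : ℝ, deriv mu0 r = -(4 * π) * Real.exp (lam0 r + mu0 r) *
    (π * (∫ w : ℝ, ∫ F in Ioi (0 : ℝ), w * f0 r w F)
      - Real.exp (-(lam0 r + mu0 r)) * psi r * deriv phi0 r)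

/-- A solution attains the initial data `(f0, lam0, mu0, phi0, psi)` at `t = 1`. -/
def AttainsData (f : ℝ → ℝ → ℝ → ℝ → ℝ) (lam mu phi : ℝ → ℝ → ℝ)
    (f0 : ℝ → ℝ → ℝ → ℝ) (lam0 mu0 phi0 psi : ℝ → ℝ) : Prop :=
  (∀ (r w F : ℝ), f 1 r w F = f0 r w F) ∧ (∀ r : ℝ, lam 1 r = lam0 r) ∧
    (∀ r : ℝ, mu 1 r = mu0 r) ∧ (∀ r : ℝ, phi 1 r = phi0 r) ∧
    (∀ r : ℝ, pt phi 1 r = psi r)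

/-- A left-maximal regular solution on `(T,1]` attaining the given data at `t = 1`:
it admits no extension to a regular solution on `(T',1]` with `0 ≤ T' < T`. -/
def IsLeftMaximalSolution (k : ℝ) (f : ℝ → ℝ → ℝ → ℝ → ℝ) (lam mu phi : ℝ → ℝ → ℝ)
    (T : ℝ) (f0 : ℝ → ℝ → ℝ → ℝ) (lam0 mu0 phi0 psi : ℝ → ℝ) : Prop :=
  IsRegularSolution k f lam mu phi (Ioc T 1) ∧
  AttainsData f lam mu phi f0 lam0 mu0 phi0 psi ∧
  ∀ T' : ℝ, 0 ≤ T' → T' < T →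
    ¬ ∃ (f' : ℝ → ℝ → ℝ → ℝ → ℝ) (lam' mu' phi' : ℝ → ℝ → ℝ),
      IsRegularSolution k f' lam' mu' phi' (Ioc T' 1) ∧
      AttainsData f' lam' mu' phi' f0 lam0 mu0 phi0 psi ∧
      (∀ t ∈ Ioc T 1, ∀ (r w F : ℝ), f' t r w F = f t r w F) ∧
      (∀ t ∈ Ioc T 1, ∀ r : ℝ, lam' t r = lam t r ∧ mu' t r = mu t r ∧ phi' t r = phi t r)

/-! Expanding `D⁺X` and `D⁻Y` by the product rule, the mixed second derivatives of `φ` cancel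
by Schwarz's theorem, and the remaining second derivatives enter only through
`e^{−2λ}φ″ − e^{−2μ}φ̈`, which the wave equation (W) replaces by first-order terms. -/

open Function

section Partials

variable {u : ℝ → ℝ → ℝ} {t r : ℝ}

theorem HasFDerivAt.hasDerivAt_pt {L : ℝ × ℝ →L[ℝ] ℝ} (h : HasFDerivAt (uncurry u) L (t, r)) :
    HasDerivAt (fun s => u s r) (L (1, 0)) t :=
  (h.comp_hasDerivAt t ((hasDerivAt_id' t).prodMk (hasDerivAt_const t r)) :)

theorem HasFDerivAt.hasDerivAt_pr {L : ℝ × ℝ →L[ℝ] ℝ} (h : HasFDerivAt (uncurry u) L (t, r)) :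
    HasDerivAt (fun s => u t s) (L (0, 1)) r :=
  (h.comp_hasDerivAt r ((hasDerivAt_const r t).prodMk (hasDerivAt_id' r)) :)

theorem HasFDerivAt.pt_eq {L : ℝ × ℝ →L[ℝ] ℝ} (h : HasFDerivAt (uncurry u) L (t, r)) :
    pt u t r = L (1, 0) :=
  h.hasDerivAt_pt.deriv

theorem HasFDerivAt.pr_eq {L : ℝ × ℝ →L[ℝ] ℝ} (h : HasFDerivAt (uncurry u) L (t, r)) :
    pr u t r = L (0, 1) :=
  h.hasDerivAt_pr.deriv

theorem DifferentiableAt.hasDerivAt_pt (h : DifferentiableAt ℝ (uncurry u) (t, r)) :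
    HasDerivAt (fun s => u s r) (pt u t r) t := by
  rw [h.hasFDerivAt.pt_eq]
  exact h.hasFDerivAt.hasDerivAt_pt

theorem DifferentiableAt.hasDerivAt_pr (h : DifferentiableAt ℝ (uncurry u) (t, r)) :
    HasDerivAt (fun s => u t s) (pr u t r) r := by
  rw [h.hasFDerivAt.pr_eq]
  exact h.hasFDerivAt.hasDerivAt_pr

end Partials

section SecondPartials

variable {u : ℝ → ℝ → ℝ} {p : ℝ × ℝ}

theorem ContDiffAt.hasFDerivAt_fderiv_apply {f : ℝ × ℝ → ℝ} (h : ContDiffAt ℝ 2 f p)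
    (v : ℝ × ℝ) : HasFDerivAt (fun q => fderiv ℝ f q v) ((fderiv ℝ (fderiv ℝ f) p).flip v) p :=
  (ContinuousLinearMap.apply ℝ ℝ v).hasFDerivAt.comp p
    ((h.fderiv_right (m := 1) le_rfl).differentiableAt one_ne_zero).hasFDerivAt

theorem ContDiffAt.hasFDerivAt_uncurry_pt (h : ContDiffAt ℝ 2 (uncurry u) p) :
    HasFDerivAt (uncurry (pt u)) ((fderiv ℝ (fderiv ℝ (uncurry u)) p).flip (1, 0)) p := by
  refine (h.hasFDerivAt_fderiv_apply (1, 0)).congr_of_eventuallyEq ?_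
  filter_upwards [h.eventually (by simp)] with q hq
  exact (hq.differentiableAt two_ne_zero).hasFDerivAt.pt_eq

theorem ContDiffAt.hasFDerivAt_uncurry_pr (h : ContDiffAt ℝ 2 (uncurry u) p) :
    HasFDerivAt (uncurry (pr u)) ((fderiv ℝ (fderiv ℝ (uncurry u)) p).flip (0, 1)) p := by
  refine (h.hasFDerivAt_fderiv_apply (0, 1)).congr_of_eventuallyEq ?_
  filter_upwards [h.eventually (by simp)] with q hq
  exact (hq.differentiableAt two_ne_zero).hasFDerivAt.pr_eq

theorem ContDiffAt.pt_pr_eq_pr_pt {t r : ℝ} (h : ContDiffAt ℝ 2 (uncurry u) (t, r)) :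
    pt (pr u) t r = pr (pt u) t r := by
  rw [h.hasFDerivAt_uncurry_pr.pt_eq, h.hasFDerivAt_uncurry_pt.pr_eq]
  exact h.isSymmSndFDerivAt (by simp) (1, 0) (0, 1)

end SecondPartials

theorem HasDerivAt.mul_exp_neg {g h : ℝ → ℝ} {g' h' x : ℝ} (hg : HasDerivAt g g' x)
    (hh : HasDerivAt h h' x) :
    HasDerivAt (fun s => g s * Real.exp (-h s)) ((g' - g x * h') * Real.exp (-h x)) x :=
  (hg.mul hh.neg.exp).congr_deriv (by simp only [Pi.neg_apply]; ring)

theorem stmt1_general (U : Set (ℝ × ℝ)) (hU : IsOpen U)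
    (lam mu phi : ℝ → ℝ → ℝ)
    (hlam : ContDiffOn ℝ 1 (fun q : ℝ × ℝ => lam q.1 q.2) U)
    (hmu : ContDiffOn ℝ 1 (fun q : ℝ × ℝ => mu q.1 q.2) U)
    (hphi : ContDiffOn ℝ 2 (fun q : ℝ × ℝ => phi q.1 q.2) U)
    (hW : ∀ q ∈ U,
      Real.exp (-(2 * lam q.1 q.2)) * prr phi q.1 q.2
        - Real.exp (-(2 * mu q.1 q.2)) * ptt phi q.1 q.2
        - Real.exp (-(2 * mu q.1 q.2)) * (pt lam q.1 q.2 - pt mu q.1 q.2 + 2 / q.1)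
            * pt phi q.1 q.2
        - Real.exp (-(2 * lam q.1 q.2)) * (pr lam q.1 q.2 - pr mu q.1 q.2)
            * pr phi q.1 q.2 = 0) :
    let X : ℝ → ℝ → ℝ := fun t r =>
      pt phi t r * Real.exp (-(mu t r)) - pr phi t r * Real.exp (-(lam t r))
    let Y : ℝ → ℝ → ℝ := fun t r =>
      pt phi t r * Real.exp (-(mu t r)) + pr phi t r * Real.exp (-(lam t r))
    let a : ℝ → ℝ → ℝ := fun t r =>
      (-(pt lam t r) - 1 / t) * Real.exp (-(mu t r)) - pr mu t r * Real.exp (-(lam t r))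
    let b : ℝ → ℝ → ℝ := fun t r => -(Real.exp (-(mu t r)) / t)
    let c : ℝ → ℝ → ℝ := fun t r =>
      (-(pt lam t r) - 1 / t) * Real.exp (-(mu t r)) + pr mu t r * Real.exp (-(lam t r))
    ∀ q ∈ U,
      (Real.exp (-(mu q.1 q.2)) * pt X q.1 q.2 + Real.exp (-(lam q.1 q.2)) * pr X q.1 q.2
        = a q.1 q.2 * X q.1 q.2 + b q.1 q.2 * Y q.1 q.2) ∧
      (Real.exp (-(mu q.1 q.2)) * pt Y q.1 q.2 - Real.exp (-(lam q.1 q.2)) * pr Y q.1 q.2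
        = b q.1 q.2 * X q.1 q.2 + c q.1 q.2 * Y q.1 q.2) := by
  intro X Y a b c q hq
  obtain ⟨t, r⟩ := q
  have hΦ : ContDiffAt ℝ 2 (uncurry phi) (t, r) := hphi.contDiffAt (hU.mem_nhds hq)
  have hM : DifferentiableAt ℝ (uncurry mu) (t, r) :=
    (hmu.contDiffAt (hU.mem_nhds hq)).differentiableAt one_ne_zero
  have hΛ : DifferentiableAt ℝ (uncurry lam) (t, r) :=
    (hlam.contDiffAt (hU.mem_nhds hq)).differentiableAt one_ne_zero
  have hΦt := hΦ.hasFDerivAt_uncurry_pt.differentiableAt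
  have hΦr := hΦ.hasFDerivAt_uncurry_pr.differentiableAt
  have hXt : pt X t r = (ptt phi t r - pt phi t r * pt mu t r) * exp (-(mu t r))
      - (pr (pt phi) t r - pr phi t r * pt lam t r) * exp (-(lam t r)) := by
    rw [← hΦ.pt_pr_eq_pr_pt]
    exact ((hΦt.hasDerivAt_pt.mul_exp_neg hM.hasDerivAt_pt).sub
      (hΦr.hasDerivAt_pt.mul_exp_neg hΛ.hasDerivAt_pt)).deriv
  have hXr : pr X t r = (pr (pt phi) t r - pt phi t r * pr mu t r) * exp (-(mu t r))
      - (prr phi t r - pr phi t r * pr lam t r) * exp (-(lam t r)) :=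
    ((hΦt.hasDerivAt_pr.mul_exp_neg hM.hasDerivAt_pr).sub
      (hΦr.hasDerivAt_pr.mul_exp_neg hΛ.hasDerivAt_pr)).deriv
  have hYt : pt Y t r = (ptt phi t r - pt phi t r * pt mu t r) * exp (-(mu t r))
      + (pr (pt phi) t r - pr phi t r * pt lam t r) * exp (-(lam t r)) := by
    rw [← hΦ.pt_pr_eq_pr_pt]
    exact ((hΦt.hasDerivAt_pt.mul_exp_neg hM.hasDerivAt_pt).add
      (hΦr.hasDerivAt_pt.mul_exp_neg hΛ.hasDerivAt_pt)).deriv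
  have hYr : pr Y t r = (pr (pt phi) t r - pt phi t r * pr mu t r) * exp (-(mu t r))
      + (prr phi t r - pr phi t r * pr lam t r) * exp (-(lam t r)) :=
    ((hΦt.hasDerivAt_pr.mul_exp_neg hM.hasDerivAt_pr).add
      (hΦr.hasDerivAt_pr.mul_exp_neg hΛ.hasDerivAt_pr)).deriv
  have hWq := hW (t, r) hq
  simp only [two_mul, neg_add, exp_add] at hWq
  exact ⟨by rw [hXt, hXr]; linear_combination -hWq, by rw [hYt, hYr]; linear_combination -hWq⟩

/-- Lemma 2.2, first part: on an open subset of `(0,∞) × ℝ` where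
the wave equation (W) holds, the null derivatives of `X = φ̇e^{−μ} − φ′e^{−λ}` and
`Y = φ̇e^{−μ} + φ′e^{−λ}` satisfy `D⁺X = aX + bY` and `D⁻Y = bX + cY`. -/
theorem stmt1 (U : Set (ℝ × ℝ)) (hU : IsOpen U) (hUpos : ∀ q ∈ U, 0 < q.1)
    (lam mu phi : ℝ → ℝ → ℝ)
    (hlam : ContDiffOn ℝ 1 (fun q : ℝ × ℝ => lam q.1 q.2) U)
    (hmu : ContDiffOn ℝ 1 (fun q : ℝ × ℝ => mu q.1 q.2) U)
    (hphi : ContDiffOn ℝ 2 (fun q : ℝ × ℝ => phi q.1 q.2) U)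
    (hW : ∀ q ∈ U,
      Real.exp (-(2 * lam q.1 q.2)) * prr phi q.1 q.2
        - Real.exp (-(2 * mu q.1 q.2)) * ptt phi q.1 q.2
        - Real.exp (-(2 * mu q.1 q.2)) * (pt lam q.1 q.2 - pt mu q.1 q.2 + 2 / q.1)
            * pt phi q.1 q.2
        - Real.exp (-(2 * lam q.1 q.2)) * (pr lam q.1 q.2 - pr mu q.1 q.2)
            * pr phi q.1 q.2 = 0) :
    let X : ℝ → ℝ → ℝ := fun t r =>
      pt phi t r * Real.exp (-(mu t r)) - pr phi t r * Real.exp (-(lam t r))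
    let Y : ℝ → ℝ → ℝ := fun t r =>
      pt phi t r * Real.exp (-(mu t r)) + pr phi t r * Real.exp (-(lam t r))
    let a : ℝ → ℝ → ℝ := fun t r =>
      (-(pt lam t r) - 1 / t) * Real.exp (-(mu t r)) - pr mu t r * Real.exp (-(lam t r))
    let b : ℝ → ℝ → ℝ := fun t r => -(Real.exp (-(mu t r)) / t)
    let c : ℝ → ℝ → ℝ := fun t r =>
      (-(pt lam t r) - 1 / t) * Real.exp (-(mu t r)) + pr mu t r * Real.exp (-(lam t r))
    ∀ q ∈ U,
      (Real.exp (-(mu q.1 q.2)) * pt X q.1 q.2 + Real.exp (-(lam q.1 q.2)) * pr X q.1 q.2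
        = a q.1 q.2 * X q.1 q.2 + b q.1 q.2 * Y q.1 q.2) ∧
      (Real.exp (-(mu q.1 q.2)) * pt Y q.1 q.2 - Real.exp (-(lam q.1 q.2)) * pr Y q.1 q.2
        = b q.1 q.2 * X q.1 q.2 + c q.1 q.2 * Y q.1 q.2) :=
  stmt1_general U hU lam mu phi hlam hmu hphi hW
end
end

section
/- Let (f,λ,μ,φ) be a regular solution of the surface-symmetric Einstein–Vlasov–scalar field system on (0,1] attaining the given initial data at t = 1, and assume inf_r e^{−2μ̊(r)} + k ≥ 0 (which is automatic for k ∈ {0,1}). Then for all t ∈ (0,1] and r ∈ ℝ the Kretschmann scalar satisfies (R_{αβγδ}R^{αβγδ})(t,r) = K₁ + K₂ + K₃ ≥ (4/t⁶)(inf_r e^{−2μ̊(r)} + k)². In particular, if inf_r e^{−2μ̊(r)} + k > 0, the Kretschmann scalar tends to ∞ as t → 0⁺, uniformly in r. -/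
open Real MeasureTheory Set Filter

noncomputable section

/-!
`K₁` is a square. For `K₂`, put `x = 2te^{-2μ}λ̇`, `y = 2te^{-2μ}μ̇`, `d = 2te^{-(λ+μ)}μ′`, so that
`4t²(e^{-4μ}λ̇² + e^{-4μ}μ̇² - 2e^{-2(λ+μ)}μ′²) = x² + y² - 2d²`. By (E1)–(E3),
`x + y = 8πt²(ρ + p)` and `d = -8πt²j`, and the dominant energy condition `2|j| ≤ ρ + p`
(AM-GM on the momentum weights for the Vlasov part, pointwise for the scalar field) gives
`2|d| ≤ x + y`, whence `x² + y² ≥ (x + y)²/2 ≥ 2d²`. For `K₃`: by (E2), `t ↦ t(e^{-2μ} + k)` has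
derivative `-8πt²p ≤ 0`, so on `(0,1]` it dominates its value at `t = 1`, which is at least
`inf e^{-2μ̊} + k ≥ 0`; squaring gives `K₃ ≥ (4/t⁶)(inf e^{-2μ̊} + k)²`.
-/

open Topology

lemma sq_add_sq_sub_two_mul_sq_nonneg {α : Type*} [CommRing α] [LinearOrder α]
    [IsStrictOrderedRing α] {x y d : α} (h : 2 * |d| ≤ x + y) :
    0 ≤ x ^ 2 + y ^ 2 - 2 * d ^ 2 := by
  nlinarith [sq_nonneg (x - y), sq_abs d, abs_nonneg d]

lemma exists_pos_forall_le_div_pow_six {A : ℝ} (hA : 0 < A) (M : ℝ) :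
    ∃ δ > 0, ∀ t ∈ Ioc (0 : ℝ) 1, t < δ → M ≤ A / t ^ 6 := by
  refine ⟨A / (|M| + 1), by positivity, fun t ht htδ => ?_⟩
  have hM : |M| + 1 < A / t := by
    rw [lt_div_iff₀ ht.1, mul_comm]
    rwa [lt_div_iff₀ (by positivity)] at htδ
  have ht6 : A / t ≤ A / t ^ 6 :=
    div_le_div_of_nonneg_left hA.le (pow_pos ht.1 6) (pow_le_of_le_one ht.1.le ht.2 (by norm_num))
  linarith [le_abs_self M]

lemma volume_prod_restrict_Ioi :
    (volume : Measure ℝ).prod (volume.restrict (Ioi 0))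
      = volume.restrict (univ ×ˢ Ioi (0 : ℝ)) := by
  rw [Measure.volume_eq_prod, ← Measure.prod_restrict, Measure.restrict_univ]

lemma integrable_prod_restrict_Ioi_of_continuousOn {h : ℝ × ℝ → ℝ} {C : ℝ}
    (hc : ContinuousOn h (univ ×ˢ Ici 0))
    (hsupp : ∀ z : ℝ × ℝ, h z ≠ 0 → |z.1| ≤ C ∧ z.2 ≤ C) :
    Integrable h ((volume : Measure ℝ).prod (volume.restrict (Ioi 0))) := by
  have hK : IsCompact (Icc (-C) C ×ˢ Icc (0 : ℝ) C) := isCompact_Icc.prod isCompact_Icc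
  rw [volume_prod_restrict_Ioi, ← IntegrableOn]
  refine ((hc.mono ?_).integrableOn_compact hK).of_forall_sdiff_eq_zero
    (MeasurableSet.univ.prod measurableSet_Ioi) fun z hz => ?_
  · exact prod_mono (subset_univ (Icc (-C) C)) Icc_subset_Ici_self
  · by_contra h0
    obtain ⟨hw, hF⟩ := hsupp z h0
    exact hz.2 ⟨abs_le.mp hw, hz.1.2.le, hF⟩

lemma abs_vJ_le {f : ℝ → ℝ → ℝ → ℝ → ℝ} {t r C : ℝ}
    (hc : ContinuousOn (fun z : ℝ × ℝ => f t r z.1 z.2) (univ ×ˢ Ici 0))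
    (hnonneg : ∀ w F, 0 ≤ f t r w F) (hsupp : ∀ w F, f t r w F ≠ 0 → |w| ≤ C ∧ F ≤ C) :
    |vJ f t r| ≤ (vRho f t r + vP f t r) / 2 := by
  set μ := (volume : Measure ℝ).prod (volume.restrict (Ioi (0 : ℝ))) with hμ
  set s : ℝ × ℝ → ℝ := fun z => √(1 + z.1 ^ 2 + z.2 / t ^ 2)
  have hs : ∀ z ∈ (univ ×ˢ Ici 0 : Set (ℝ × ℝ)), 0 < s z := fun z hz =>
    sqrt_pos.mpr (by have := div_nonneg (mem_Ici.mp hz.2) (sq_nonneg t); positivity)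
  have hint : ∀ u : ℝ × ℝ → ℝ, ContinuousOn u (univ ×ˢ Ici 0) →
      Integrable (fun z => u z * f t r z.1 z.2) μ := fun u hu =>
    integrable_prod_restrict_Ioi_of_continuousOn (hu.mul hc)
      fun z hz => hsupp z.1 z.2 (right_ne_zero_of_mul hz)
  have hJ := hint (·.1) continuousOn_fst
  have hρ := hint s (by fun_prop)
  have hp := hint (fun z => z.1 ^ 2 / s z)
    (ContinuousOn.div (by fun_prop) (by fun_prop) fun z hz => (hs z hz).ne')
  have hpointwise : ∀ᵐ z ∂μ, ‖z.1 * f t r z.1 z.2‖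
      ≤ (s z * f t r z.1 z.2 + z.1 ^ 2 / s z * f t r z.1 z.2) / 2 := by
    rw [hμ, volume_prod_restrict_Ioi]
    filter_upwards [ae_restrict_mem (MeasurableSet.univ.prod measurableSet_Ioi)] with z hz
    have hsz := hs z ⟨trivial, mem_Ici.mpr hz.2.le⟩
    have hw : |z.1| ≤ (s z + z.1 ^ 2 / s z) / 2 := by
      rw [show (s z + z.1 ^ 2 / s z) / 2 = (s z ^ 2 + z.1 ^ 2) / (2 * s z) by field_simp,
        le_div_iff₀ (by positivity)]
      linarith [two_mul_le_add_sq |z.1| (s z), sq_abs z.1]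
    rw [norm_mul, Real.norm_eq_abs, Real.norm_eq_abs, abs_of_nonneg (hnonneg _ _)]
    calc |z.1| * f t r z.1 z.2 ≤ (s z + z.1 ^ 2 / s z) / 2 * f t r z.1 z.2 :=
          mul_le_mul_of_nonneg_right hw (hnonneg _ _)
      _ = _ := by ring
  have hbound := norm_integral_le_of_norm_le
    (g := fun z => (s z * f t r z.1 z.2 + z.1 ^ 2 / s z * f t r z.1 z.2) / 2)
    ((hρ.add hp).div_const 2) hpointwise
  rw [integral_div, integral_add hρ hp, Real.norm_eq_abs] at hbound
  have hJ' : ∫ w : ℝ, ∫ F in Ioi (0 : ℝ), w * f t r w F = ∫ z, z.1 * f t r z.1 z.2 ∂μ :=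
    integral_integral hJ
  have hρ' : ∫ w : ℝ, ∫ F in Ioi (0 : ℝ), √(1 + w ^ 2 + F / t ^ 2) * f t r w F
      = ∫ z, s z * f t r z.1 z.2 ∂μ :=
    integral_integral hρ
  have hp' : ∫ w : ℝ, ∫ F in Ioi (0 : ℝ), (w ^ 2 / √(1 + w ^ 2 + F / t ^ 2)) * f t r w F
      = ∫ z, z.1 ^ 2 / s z * f t r z.1 z.2 ∂μ :=
    integral_integral hp
  unfold vJ vRho vP
  rw [hJ', hρ', hp', abs_mul, abs_of_nonneg (by positivity)]
  calc _ ≤ π / t ^ 2 *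
        (((∫ z, s z * f t r z.1 z.2 ∂μ) + ∫ z, z.1 ^ 2 / s z * f t r z.1 z.2 ∂μ) / 2) :=
        mul_le_mul_of_nonneg_left hbound (by positivity)
    _ = _ := by ring

lemma hasDerivAt_pt {u : ℝ → ℝ → ℝ} {s : Set (ℝ × ℝ)} {n : WithTop ℕ∞}
    (hu : ContDiffOn ℝ n (fun q : ℝ × ℝ => u q.1 q.2) s) (hn : n ≠ 0) {t r : ℝ}
    (hs : s ∈ 𝓝 (t, r)) : HasDerivAt (fun τ => u τ r) (pt u t r) t := by
  have hd : DifferentiableAt ℝ (fun q : ℝ × ℝ => u q.1 q.2) (t, r) :=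
    (hu.differentiableOn hn).differentiableAt hs
  exact (hd.comp t (differentiableAt_id.prodMk (differentiableAt_const r))).hasDerivAt

namespace IsRegularSolution

variable {k : ℝ} {f : ℝ → ℝ → ℝ → ℝ → ℝ} {lam mu phi : ℝ → ℝ → ℝ} {I : Set ℝ}

lemma pres_nonneg (hsol : IsRegularSolution k f lam mu phi I) {t : ℝ} (ht : t ∈ I) (r : ℝ) :
    0 ≤ pres f lam mu phi t r := by
  have hvP : 0 ≤ vP f t r :=
    mul_nonneg (by positivity) <| integral_nonneg fun w =>
      setIntegral_nonneg measurableSet_Ioi fun F _ =>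
        mul_nonneg (by positivity) (hsol.f_nonneg t ht r w F)
  unfold pres
  positivity

lemma two_mul_abs_mom_le (hsol : IsRegularSolution k f lam mu phi I) {t : ℝ} (ht : t ∈ I)
    (r : ℝ) : 2 * |mom f lam mu phi t r| ≤ rho f lam mu phi t r + pres f lam mu phi t r := by
  obtain ⟨C, hC⟩ := hsol.supp_bounded t ht t ht
  have hvJ : |vJ f t r| ≤ (vRho f t r + vP f t r) / 2 :=
    abs_vJ_le (hsol.f_contDiff.continuousOn.comp
      (Continuous.continuousOn (by fun_prop : Continuous fun z : ℝ × ℝ => (t, r, z.1, z.2)))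
      fun z (hz : z ∈ univ ×ˢ Ici 0) => ⟨ht, hz.2⟩)
      (hsol.f_nonneg t ht r) (hC t ⟨le_rfl, le_rfl⟩ r)
  set u := exp (-mu t r) * pt phi t r
  set v := exp (-lam t r) * pr phi t r
  have hcross : exp (-(lam t r + mu t r)) * pt phi t r * pr phi t r = u * v := by
    simp only [u, v, neg_add, exp_add]; ring
  have hsq : exp (-(2 * mu t r)) * pt phi t r ^ 2 + exp (-(2 * lam t r)) * pr phi t r ^ 2
      = u ^ 2 + v ^ 2 := by
    simp only [u, v, mul_pow, ← exp_nat_mul]; ring_nf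
  have hfield : 2 * |u * v| ≤ u ^ 2 + v ^ 2 := by
    rw [abs_mul, ← mul_assoc, ← sq_abs u, ← sq_abs v]
    exact two_mul_le_add_sq |u| |v|
  unfold mom rho pres
  rw [hcross, hsq]
  linarith [abs_sub (vJ f t r) (u * v)]

lemma kretschmann_two_nonneg (hsol : IsRegularSolution k f lam mu phi I) {t : ℝ} (ht : t ∈ I)
    (ht0 : 0 < t) (r : ℝ) :
    0 ≤ exp (-(4 * mu t r)) * pt lam t r ^ 2 + exp (-(4 * mu t r)) * pt mu t r ^ 2
      - 2 * exp (-(2 * (lam t r + mu t r))) * pr mu t r ^ 2 := by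
  set E := exp (-(2 * mu t r))
  set P := exp (-(lam t r + mu t r))
  set c := 8 * π * t ^ 2
  have hE4 : exp (-(4 * mu t r)) = E ^ 2 := by rw [← exp_nat_mul]; ring_nf
  have hP2 : exp (-(2 * (lam t r + mu t r))) = P ^ 2 := by rw [← exp_nat_mul]; ring_nf
  have hP : P * exp (lam t r + mu t r) = 1 := by rw [← exp_add]; simp
  have hlam : 2 * t * (E * pt lam t r) = c * rho f lam mu phi t r - (E + k) := by
    linear_combination hsol.eqE1 t ht r
  have hmu : 2 * t * (E * pt mu t r) = c * pres f lam mu phi t r + (E + k) := by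
    linear_combination hsol.eqE2 t ht r
  have hmu' : 2 * t * (P * pr mu t r) = -(c * mom f lam mu phi t r) := by
    rw [hsol.eqE3 t ht r]; linear_combination (-(c * mom f lam mu phi t r)) * hP
  have hdom :
      2 * |2 * t * (P * pr mu t r)| ≤ 2 * t * (E * pt lam t r) + 2 * t * (E * pt mu t r) := by
    rw [hlam, hmu, hmu', abs_neg, abs_mul, abs_of_nonneg (by positivity)]
    nlinarith [hsol.two_mul_abs_mom_le ht r, show 0 ≤ c by positivity]
  refine nonneg_of_mul_nonneg_right ?_ (by positivity : 0 < 4 * t ^ 2)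
  convert sq_add_sq_sub_two_mul_sq_nonneg hdom using 1
  rw [hE4, hP2]; ring

lemma antitoneOn_mul_exp_add (hsol : IsRegularSolution k f lam mu phi I) (hI : Convex ℝ I)
    (r : ℝ) : AntitoneOn (fun t => t * (exp (-(2 * mu t r)) + k)) I := by
  have hmu := hsol.mu_contDiff
  refine antitoneOn_of_hasDerivWithinAt_nonpos hI ?_
    (f' := fun t => -(8 * π * t ^ 2 * pres f lam mu phi t r)) (fun t ht => ?_)
    fun t ht => neg_nonpos.mpr (mul_nonneg (by positivity)
      (hsol.pres_nonneg (interior_subset ht) r))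
  · have : ContinuousOn (fun t => mu t r) I :=
      hmu.continuousOn.comp (Continuous.continuousOn (by fun_prop : Continuous fun t : ℝ => (t, r)))
        fun t ht => ⟨ht, mem_univ r⟩
    fun_prop
  · have hdiff := hasDerivAt_pt (r := r) hmu (by norm_num)
      (prod_mem_nhds (mem_interior_iff_mem_nhds.mp ht) univ_mem)
    refine (((hasDerivAt_id t).mul ((hdiff.const_mul 2).neg.exp.add_const k)).congr_deriv
      ?_).hasDerivWithinAt
    simp only [Pi.neg_apply, id]
    linear_combination -(hsol.eqE2 t (interior_subset ht) r)

lemma four_div_pow_six_mul_sq_le (hsol : IsRegularSolution k f lam mu phi (Ioc 0 1)) {q : ℝ}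
    (hq : 0 ≤ q) (hq1 : ∀ r, q ≤ exp (-(2 * mu 1 r)) + k) {t : ℝ} (ht : t ∈ Ioc 0 1) (r : ℝ) :
    4 / t ^ 6 * q ^ 2 ≤ 4 / t ^ 4 * (exp (-(2 * mu t r)) + k) ^ 2 := by
  have hmono : q ≤ t * (exp (-(2 * mu t r)) + k) := by
    refine (hq1 r).trans ?_
    simpa using hsol.antitoneOn_mul_exp_add (convex_Ioc 0 1) r ht ⟨one_pos, le_rfl⟩ ht.2
  have ht0 := ht.1.ne'
  calc 4 / t ^ 6 * q ^ 2 ≤ 4 / t ^ 6 * (t * (exp (-(2 * mu t r)) + k)) ^ 2 := by gcongr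
    _ = _ := by field_simp

end IsRegularSolution

theorem stmt8_general (k : ℝ)
    (f0 : ℝ → ℝ → ℝ → ℝ) (lam0 mu0 phi0 psi : ℝ → ℝ)
    (f : ℝ → ℝ → ℝ → ℝ → ℝ) (lam mu phi : ℝ → ℝ → ℝ)
    (hsol : IsRegularSolution k f lam mu phi (Ioc 0 1))
    (hatt : AttainsData f lam mu phi f0 lam0 mu0 phi0 psi)
    (hinf : 0 ≤ (⨅ r : ℝ, Real.exp (-(2 * mu0 r))) + k) :
    let K1 : ℝ → ℝ → ℝ := fun t r => 4 * (Real.exp (-(2 * lam t r))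
        * (prr mu t r + pr mu t r * (pr mu t r - pr lam t r))
      - Real.exp (-(2 * mu t r))
        * (ptt lam t r + pt lam t r * (pt lam t r - pt mu t r))) ^ 2
    let K2 : ℝ → ℝ → ℝ := fun t r => (8 / t ^ 2) *
      (Real.exp (-(4 * mu t r)) * (pt lam t r) ^ 2
        + Real.exp (-(4 * mu t r)) * (pt mu t r) ^ 2
        - 2 * Real.exp (-(2 * (lam t r + mu t r))) * (pr mu t r) ^ 2)
    let K3 : ℝ → ℝ → ℝ := fun t r => (4 / t ^ 4) * (Real.exp (-(2 * mu t r)) + k) ^ 2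
    (∀ t ∈ Ioc (0 : ℝ) 1, ∀ r : ℝ,
      (4 / t ^ 6) * ((⨅ r' : ℝ, Real.exp (-(2 * mu0 r'))) + k) ^ 2
        ≤ K1 t r + K2 t r + K3 t r) ∧
    (0 < (⨅ r : ℝ, Real.exp (-(2 * mu0 r))) + k →
      ∀ M : ℝ, ∃ δ : ℝ, 0 < δ ∧ ∀ t ∈ Ioc (0 : ℝ) 1, t < δ → ∀ r : ℝ,
        M ≤ K1 t r + K2 t r + K3 t r) := by
  intro K1 K2 K3
  set q := (⨅ r : ℝ, exp (-(2 * mu0 r))) + k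
  have hq1 : ∀ r, q ≤ exp (-(2 * mu 1 r)) + k := fun r => by
    rw [hatt.2.2.1 r]
    exact add_le_add_left (ciInf_le ⟨0, by rintro _ ⟨r', rfl⟩; positivity⟩ r) k
  have hbound : ∀ t ∈ Ioc (0 : ℝ) 1, ∀ r : ℝ, 4 / t ^ 6 * q ^ 2 ≤ K1 t r + K2 t r + K3 t r := by
    intro t ht r
    have hK1 : 0 ≤ K1 t r := by positivity
    have hK2 : 0 ≤ K2 t r :=
      mul_nonneg (by positivity) (hsol.kretschmann_two_nonneg ht ht.1 r)
    have hK3 : 4 / t ^ 6 * q ^ 2 ≤ K3 t r := hsol.four_div_pow_six_mul_sq_le hinf hq1 ht r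
    linarith
  refine ⟨hbound, fun hq M => ?_⟩
  obtain ⟨δ, hδ, hδM⟩ := exists_pos_forall_le_div_pow_six (by positivity : 0 < 4 * q ^ 2) M
  refine ⟨δ, hδ, fun t ht htδ r => (hδM t ht htδ).trans ?_⟩
  rw [← div_mul_eq_mul_div]
  exact hbound t ht r

/-- Theorem 3.3: lower bound `(4/t⁶)(inf_r e^{−2μ̊} + k)²` for the
Kretschmann scalar of a regular solution on `(0,1]`, and uniform blow-up as `t → 0⁺`
when `inf_r e^{−2μ̊} + k > 0`. -/
theorem stmt8 (k : ℝ) (hk : k = -1 ∨ k = 0 ∨ k = 1)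
    (f0 : ℝ → ℝ → ℝ → ℝ) (lam0 mu0 phi0 psi : ℝ → ℝ)
    (hdata : IsInitialData f0 lam0 mu0 phi0 psi)
    (f : ℝ → ℝ → ℝ → ℝ → ℝ) (lam mu phi : ℝ → ℝ → ℝ)
    (hsol : IsRegularSolution k f lam mu phi (Ioc 0 1))
    (hatt : AttainsData f lam mu phi f0 lam0 mu0 phi0 psi)
    (hinf : 0 ≤ (⨅ r : ℝ, Real.exp (-(2 * mu0 r))) + k) :
    let K1 : ℝ → ℝ → ℝ := fun t r => 4 * (Real.exp (-(2 * lam t r))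
        * (prr mu t r + pr mu t r * (pr mu t r - pr lam t r))
      - Real.exp (-(2 * mu t r))
        * (ptt lam t r + pt lam t r * (pt lam t r - pt mu t r))) ^ 2
    let K2 : ℝ → ℝ → ℝ := fun t r => (8 / t ^ 2) *
      (Real.exp (-(4 * mu t r)) * (pt lam t r) ^ 2
        + Real.exp (-(4 * mu t r)) * (pt mu t r) ^ 2
        - 2 * Real.exp (-(2 * (lam t r + mu t r))) * (pr mu t r) ^ 2)
    let K3 : ℝ → ℝ → ℝ := fun t r => (4 / t ^ 4) * (Real.exp (-(2 * mu t r)) + k) ^ 2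
    (∀ t ∈ Ioc (0 : ℝ) 1, ∀ r : ℝ,
      (4 / t ^ 6) * ((⨅ r' : ℝ, Real.exp (-(2 * mu0 r'))) + k) ^ 2
        ≤ K1 t r + K2 t r + K3 t r) ∧
    (0 < (⨅ r : ℝ, Real.exp (-(2 * mu0 r))) + k →
      ∀ M : ℝ, ∃ δ : ℝ, 0 < δ ∧ ∀ t ∈ Ioc (0 : ℝ) 1, t < δ → ∀ r : ℝ,
        M ≤ K1 t r + K2 t r + K3 t r) :=
  stmt8_general k f0 lam0 mu0 phi0 psi f lam mu phi hsol hatt hinf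
end
end

section
/- Let T ∈ [0,1), C > 0, and let v : (T,1] → [0,∞) be continuous and satisfy v(t) ≤ v(1) + C∫_t^1 (1 + v(s))(1 + log₊(1 + v(s))) ds for all t ∈ (T,1]. Then v is bounded on (T,1], by a constant depending only on C and v(1) (in particular independent of T). -/
open Real MeasureTheory Set Topology Filter

/-- `log₊ x = log x` if `log x ≥ 0`, and `0` otherwise. -/
noncomputable def logPos (x : ℝ) : ℝ := max (Real.log x) 0

/-- Osgood-type Gronwall lemma. A continuous nonnegative function
on `(T,1]` satisfying `v(t) ≤ v(1) + C∫_t^1 (1+v)(1+log₊(1+v))` is bounded by a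
constant depending only on `C` and `v(1)`, independent of `T`. -/
theorem stmt14 (C v1 : ℝ) (hC : 0 < C) :
    ∃ M : ℝ, ∀ T ∈ Ico (0 : ℝ) 1, ∀ v : ℝ → ℝ,
      ContinuousOn v (Ioc T 1) →
      (∀ t ∈ Ioc T 1, 0 ≤ v t) →
      v 1 = v1 →
      (∀ t ∈ Ioc T 1, v t ≤ v 1
        + C * ∫ s in Ioc t 1, (1 + v s) * (1 + logPos (1 + v s))) →
      ∀ t ∈ Ioc T 1, v t ≤ M := by
  refine ⟨Real.exp (Real.exp (Real.log (1 + Real.log (1 + |v1|)) + C) - 1) - 1,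
    fun T hT v hcont hnn hv1 hineq t ht => ?_⟩
  have hT1 : T < 1 := hT.2
  have h1mem : (1:ℝ) ∈ Ioc T 1 := ⟨hT1, le_refl 1⟩
  have hv1nn : 0 ≤ v1 := hv1 ▸ hnn 1 h1mem
  have habs : |v1| = v1 := abs_of_nonneg hv1nn
  rw [habs]
  set G : ℝ → ℝ := fun s => (1 + v s) * (1 + logPos (1 + v s)) with hGdef
  have h1v : ∀ s ∈ Ioc T 1, (0:ℝ) < 1 + v s := fun s hs => by linarith [hnn s hs]
  have hc1 : ContinuousOn (fun s => 1 + v s) (Ioc T 1) := continuousOn_const.add hcont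
  have hc2 : ContinuousOn (fun s => Real.log (1 + v s)) (Ioc T 1) :=
    hc1.log (fun s hs => (h1v s hs).ne')
  have hGcont : ContinuousOn G (Ioc T 1) := by
    apply hc1.mul
    apply continuousOn_const.add
    have hm : ContinuousOn (fun s => max (Real.log (1 + v s)) 0) (Ioc T 1) :=
      hc2.sup continuousOn_const
    simpa [logPos] using hm
  have hGnn : ∀ s ∈ Ioc T 1, 0 ≤ G s := fun s hs => by
    have h1 := h1v s hs
    have h2 : (0:ℝ) ≤ 1 + logPos (1 + v s) := by
      have := le_max_right (Real.log (1 + v s)) 0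
      simp only [logPos]; linarith
    positivity
  set F : ℝ → ℝ := fun x => v1 + C * ∫ s in x..1, G s with hFdef
  have hFx : ∀ x : ℝ, F x = v1 + C * ∫ s in x..1, G s := fun x => rfl
  -- v ≤ F on Ioc T 1
  have hvF : ∀ x ∈ Ioc T 1, v x ≤ F x := by
    intro x hx
    have h := hineq x hx
    rw [hv1] at h
    rw [hFx, intervalIntegral.integral_of_le hx.2]
    exact h
  have hsubIcc : ∀ x ∈ Ioc T 1, Icc x 1 ⊆ Ioc T 1 := by
    intro x hx s hs
    exact ⟨lt_of_lt_of_le hx.1 hs.1, hs.2⟩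
  have hGint : ∀ x ∈ Ioc T 1, IntervalIntegrable G volume x 1 := by
    intro x hx
    apply ContinuousOn.intervalIntegrable
    rw [uIcc_of_le hx.2]
    exact hGcont.mono (hsubIcc x hx)
  have hFnn : ∀ x ∈ Ioc T 1, v1 ≤ F x := by
    intro x hx
    have h0 : 0 ≤ ∫ s in x..1, G s := by
      rw [intervalIntegral.integral_of_le hx.2]
      apply setIntegral_nonneg measurableSet_Ioc
      exact fun s hs => hGnn s ⟨lt_trans hx.1 hs.1, hs.2⟩
    have : 0 ≤ C * ∫ s in x..1, G s := mul_nonneg hC.le h0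
    rw [hFx]; linarith
  have h1F : ∀ x ∈ Ioc T 1, (0:ℝ) < 1 + F x := fun x hx => by linarith [hFnn x hx]
  have hlogF : ∀ x ∈ Ioc T 1, (0:ℝ) < 1 + Real.log (1 + F x) := by
    intro x hx
    have : (0:ℝ) ≤ Real.log (1 + F x) := Real.log_nonneg (by linarith [hFnn x hx])
    linarith
  -- main claim
  have key : Real.log (1 + Real.log (1 + F t)) ≤ Real.log (1 + Real.log (1 + v1)) + C := by
    rcases eq_or_lt_of_le ht.2 with h1 | hlt
    · have : F t = v1 := by rw [hFx, h1, intervalIntegral.integral_same, mul_zero, add_zero]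
      rw [this]; linarith
    · set φ : ℝ → ℝ := fun x => Real.log (1 + Real.log (1 + F x)) + C * x with hφdef
      have hder : ∀ x ∈ Ioo t 1, HasDerivAt φ
          (C * -G x / (1 + F x) / (1 + Real.log (1 + F x)) + C * 1) x := by
        intro x hx
        have hxm : x ∈ Ioc T 1 := ⟨lt_trans ht.1 hx.1, hx.2.le⟩
        have hxo : x ∈ Ioo T 1 := ⟨hxm.1, hx.2⟩
        have hGca : ContinuousAt G x := hGcont.continuousAt (Ioc_mem_nhds hxo.1 hxo.2)
        have hmeas : StronglyMeasurableAtFilter G (𝓝 x) volume :=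
          (hGcont.mono Ioo_subset_Ioc_self).stronglyMeasurableAtFilter isOpen_Ioo x hxo
        have hFd : HasDerivAt F (C * (-G x)) x := by
          apply HasDerivAt.const_add
          exact (intervalIntegral.integral_hasDerivAt_left (hGint x hxm) hmeas hGca).const_mul C
        apply HasDerivAt.add _ ((hasDerivAt_id x).const_mul C)
        have h1 : HasDerivAt (fun y => 1 + F y) (C * (-G x)) x := hFd.const_add 1
        have h2 : HasDerivAt (fun y => 1 + Real.log (1 + F y)) (C * (-G x) / (1 + F x)) x :=
          (h1.log (h1F x hxm).ne').const_add 1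
        exact h2.log (hlogF x hxm).ne'
      have hsub : Icc t 1 ⊆ Ioc T 1 := hsubIcc t ht
      have hmono : MonotoneOn φ (Icc t 1) := by
        have hFc : ContinuousOn F (Icc t 1) := by
          apply continuousOn_const.add
          apply continuousOn_const.mul
          have hint : IntegrableOn G (uIcc t 1) volume := by
            rw [uIcc_of_le ht.2]
            exact (hGcont.mono hsub).integrableOn_compact isCompact_Icc
          have := intervalIntegral.continuousOn_primitive_interval_left hint
          rwa [uIcc_of_le ht.2] at this
        have hφc : ContinuousOn φ (Icc t 1) := by
          apply ContinuousOn.add _ (continuousOn_const.mul continuousOn_id)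
          apply ContinuousOn.log
          · exact continuousOn_const.add ((continuousOn_const.add hFc).log
              (fun x hx => (h1F x (hsub hx)).ne'))
          · exact fun x hx => (hlogF x (hsub hx)).ne'
        apply monotoneOn_of_deriv_nonneg (convex_Icc t 1) hφc
        · rw [interior_Icc]
          exact fun x hx => ((hder x hx).differentiableAt).differentiableWithinAt
        · rw [interior_Icc]
          intro x hx
          rw [(hder x hx).deriv]
          have hxm : x ∈ Ioc T 1 := ⟨lt_trans ht.1 hx.1, hx.2.le⟩
          have hD1 := h1F x hxm
          have hD2 := hlogF x hxm
          have hGle : G x ≤ (1 + F x) * (1 + Real.log (1 + F x)) := by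
            have hvx := hnn x hxm
            have hvFx := hvF x hxm
            have hlp : logPos (1 + v x) = Real.log (1 + v x) := by
              simp only [logPos]
              exact max_eq_left (Real.log_nonneg (by linarith))
            rw [hGdef]
            simp only [hlp]
            have hle1 : (1:ℝ) + v x ≤ 1 + F x := by linarith
            have hle2 : Real.log (1 + v x) ≤ Real.log (1 + F x) :=
              Real.log_le_log (by linarith) hle1
            have hln := Real.log_nonneg (show (1:ℝ) ≤ 1 + v x by linarith)
            exact mul_le_mul hle1 (by linarith) (by linarith) hD1.le
          have hq : C * G x / ((1 + F x) * (1 + Real.log (1 + F x))) ≤ C := by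
            rw [div_le_iff₀ (by positivity)]
            calc C * G x ≤ C * ((1 + F x) * (1 + Real.log (1 + F x))) :=
                  mul_le_mul_of_nonneg_left hGle hC.le
              _ = C * ((1 + F x) * (1 + Real.log (1 + F x))) := rfl
          have heq : C * -G x / (1 + F x) / (1 + Real.log (1 + F x)) =
              -(C * G x / ((1 + F x) * (1 + Real.log (1 + F x)))) := by
            rw [div_div, mul_neg, neg_div]
          rw [heq]
          linarith
      have hm := hmono (left_mem_Icc.mpr hlt.le) (right_mem_Icc.mpr hlt.le) hlt.le
      have hF1 : F 1 = v1 := by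
        rw [hFx, intervalIntegral.integral_same, mul_zero, add_zero]
      simp only [hφdef, hF1] at hm
      have ht0 : 0 ≤ t := le_trans hT.1 ht.1.le
      have := mul_nonneg hC.le ht0
      linarith
  -- unwind
  have h2 := hlogF t ht
  have h3 := h1F t ht
  have step1 : 1 + Real.log (1 + F t) ≤ Real.exp (Real.log (1 + Real.log (1 + v1)) + C) := by
    calc 1 + Real.log (1 + F t) = Real.exp (Real.log (1 + Real.log (1 + F t))) :=
          (Real.exp_log h2).symm
      _ ≤ _ := Real.exp_le_exp.mpr key
  have step2 : 1 + F t ≤ Real.exp (Real.exp (Real.log (1 + Real.log (1 + v1)) + C) - 1) := by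
    calc 1 + F t = Real.exp (Real.log (1 + F t)) := (Real.exp_log h3).symm
      _ ≤ _ := Real.exp_le_exp.mpr (by linarith)
  have := hvF t ht
  linarith
end

section
/- Let T ∈ [0,1), k ∈ ℝ, let μ : (T,1] → ℝ be C¹, and let p : (T,1] → ℝ satisfy p(t) ≥ 0 and e^{−2μ(t)}(2tμ̇(t) − 1) − k = 8πt²p(t) for all t ∈ (T,1] (with p continuous). Then for all t ∈ (T,1]: e^{−2μ(t)} ≥ (e^{−2μ(1)} + k)/t − k. In particular, if k ≥ 0 then e^{−2μ(t)} ≥ e^{−2μ(1)}, and if k = −1 and μ(1) ≤ 0 then e^{−2μ(t)} ≥ 1; in either case μ is bounded above on (T,1]. -/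
open Real Set

/-!
Along the field equation, `F(t) = t e^{-2μ(t)} + k t` has derivative
`-(e^{-2μ}(2tμ̇ - 1) - k) = -8πt²p ≤ 0`, so `F` is antitone and `F(1) ≤ F(t)`; dividing by `t`
gives the lower bound, and the two special cases follow from `t ≤ 1`.
-/

lemma hasDerivWithinAt_mul_exp_neg_two_mul_add {mu : ℝ → ℝ} {m k t : ℝ} {s : Set ℝ}
    (hmu : HasDerivWithinAt mu m s t) :
    HasDerivWithinAt (fun x => x * exp (-(2 * mu x)) + k * x)
      (-(exp (-(2 * mu t)) * (2 * t * m - 1) - k)) s t := by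
  have hexp : HasDerivWithinAt (fun x => exp (-(2 * mu x))) (exp (-(2 * mu t)) * -(2 * m)) s t :=
    ((hmu.const_mul 2).neg).exp
  have hid : HasDerivWithinAt (fun x => x) 1 s t := (hasDerivAt_id' t).hasDerivWithinAt
  exact ((hid.mul hexp).add (hid.const_mul k)).congr_deriv (by ring)

lemma antitoneOn_mul_exp_neg_two_mul_add {s : Set ℝ} (hs : Convex ℝ s) {mu mu' : ℝ → ℝ} {k : ℝ}
    (hmu : ∀ t ∈ s, HasDerivWithinAt mu (mu' t) s t)
    (hk : ∀ t ∈ s, k ≤ exp (-(2 * mu t)) * (2 * t * mu' t - 1)) :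
    AntitoneOn (fun t => t * exp (-(2 * mu t)) + k * t) s := by
  have hF : ∀ t ∈ s, HasDerivWithinAt (fun x => x * exp (-(2 * mu x)) + k * x)
      (-(exp (-(2 * mu t)) * (2 * t * mu' t - 1) - k)) s t :=
    fun t ht => hasDerivWithinAt_mul_exp_neg_two_mul_add (hmu t ht)
  refine antitoneOn_of_hasDerivWithinAt_nonpos hs (fun t ht => (hF t ht).continuousWithinAt)
    (fun t ht => (hF t (interior_subset ht)).mono interior_subset) fun t ht => ?_
  linarith [hk t (interior_subset ht)]

lemma div_sub_le_exp_neg_two_mul {T k : ℝ} (hT : T ∈ Ico (0 : ℝ) 1) {mu mu' : ℝ → ℝ}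
    (hmu : ∀ t ∈ Ioc T 1, HasDerivWithinAt mu (mu' t) (Ioc T 1) t)
    (hk : ∀ t ∈ Ioc T 1, k ≤ exp (-(2 * mu t)) * (2 * t * mu' t - 1)) :
    ∀ t ∈ Ioc T 1, (exp (-(2 * mu 1)) + k) / t - k ≤ exp (-(2 * mu t)) := by
  intro t ht
  have hF_le : 1 * exp (-(2 * mu 1)) + k * 1 ≤ t * exp (-(2 * mu t)) + k * t :=
    antitoneOn_mul_exp_neg_two_mul_add (convex_Ioc T 1) hmu hk ht ⟨hT.2, le_rfl⟩ ht.2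
  have ht₀ : 0 < t := hT.1.trans_lt ht.1
  rw [div_sub' ht₀.ne', div_le_iff₀ ht₀]
  linarith

theorem stmt15_general (T k : ℝ) (hT : T ∈ Ico (0 : ℝ) 1) (mu mu' p : ℝ → ℝ)
    (hmu : ∀ t ∈ Ioc T 1, HasDerivWithinAt mu (mu' t) (Ioc T 1) t)
    (hp : ∀ t ∈ Ioc T 1, 0 ≤ p t)
    (heq : ∀ t ∈ Ioc T 1,
      Real.exp (-(2 * mu t)) * (2 * t * mu' t - 1) - k = 8 * π * t ^ 2 * p t) :
    (∀ t ∈ Ioc T 1, (Real.exp (-(2 * mu 1)) + k) / t - k ≤ Real.exp (-(2 * mu t))) ∧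
    (0 ≤ k → ∀ t ∈ Ioc T 1, Real.exp (-(2 * mu 1)) ≤ Real.exp (-(2 * mu t))) ∧
    (k = -1 → mu 1 ≤ 0 → ∀ t ∈ Ioc T 1, 1 ≤ Real.exp (-(2 * mu t))) ∧
    ((0 ≤ k ∨ (k = -1 ∧ mu 1 ≤ 0)) → ∃ M : ℝ, ∀ t ∈ Ioc T 1, mu t ≤ M) := by
  have hk : ∀ t ∈ Ioc T 1, k ≤ exp (-(2 * mu t)) * (2 * t * mu' t - 1) := fun t ht => by
    have : 0 ≤ 8 * π * t ^ 2 * p t := by have := hp t ht; positivity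
    linarith [heq t ht]
  have bound := div_sub_le_exp_neg_two_mul hT hmu hk
  have hk_nonneg : 0 ≤ k → ∀ t ∈ Ioc T 1, exp (-(2 * mu 1)) ≤ exp (-(2 * mu t)) := by
    intro hk₀ t ht
    have ht₀ : 0 < t := hT.1.trans_lt ht.1
    have : exp (-(2 * mu 1)) + k ≤ (exp (-(2 * mu 1)) + k) / t :=
      le_div_self (by positivity) ht₀ ht.2
    linarith [bound t ht]
  have hk_neg_one : k = -1 → mu 1 ≤ 0 → ∀ t ∈ Ioc T 1, 1 ≤ exp (-(2 * mu t)) := by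
    rintro rfl hmu₁ t ht
    have : 0 ≤ (exp (-(2 * mu 1)) + -1) / t :=
      div_nonneg (by linarith [one_le_exp_iff.mpr (by linarith : 0 ≤ -(2 * mu 1))])
        (hT.1.trans ht.1.le)
    linarith [bound t ht]
  refine ⟨bound, hk_nonneg, hk_neg_one, ?_⟩
  rintro (hk₀ | ⟨hk₁, hmu₁⟩)
  · exact ⟨mu 1, fun t ht => by linarith [exp_le_exp.mp (hk_nonneg hk₀ t ht)]⟩
  · exact ⟨0, fun t ht => by linarith [one_le_exp_iff.mp (hk_neg_one hk₁ hmu₁ t ht)]⟩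

/-- the one-dimensional consequence of the field equation (E2)
together with `p ≥ 0`: `e^{−2μ(t)} ≥ (e^{−2μ(1)} + k)/t − k`; in particular `μ` is
bounded above if `k ≥ 0`, or if `k = −1` and `μ(1) ≤ 0`. -/
theorem stmt15 (T k : ℝ) (hT : T ∈ Ico (0 : ℝ) 1) (mu mu' p : ℝ → ℝ)
    (hmu : ∀ t ∈ Ioc T 1, HasDerivWithinAt mu (mu' t) (Ioc T 1) t)
    (hmu'c : ContinuousOn mu' (Ioc T 1))
    (hpc : ContinuousOn p (Ioc T 1))
    (hp : ∀ t ∈ Ioc T 1, 0 ≤ p t)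
    (heq : ∀ t ∈ Ioc T 1,
      Real.exp (-(2 * mu t)) * (2 * t * mu' t - 1) - k = 8 * π * t ^ 2 * p t) :
    (∀ t ∈ Ioc T 1, (Real.exp (-(2 * mu 1)) + k) / t - k ≤ Real.exp (-(2 * mu t))) ∧
    (0 ≤ k → ∀ t ∈ Ioc T 1, Real.exp (-(2 * mu 1)) ≤ Real.exp (-(2 * mu t))) ∧
    (k = -1 → mu 1 ≤ 0 → ∀ t ∈ Ioc T 1, 1 ≤ Real.exp (-(2 * mu t))) ∧
    ((0 ≤ k ∨ (k = -1 ∧ mu 1 ≤ 0)) → ∃ M : ℝ, ∀ t ∈ Ioc T 1, mu t ≤ M) :=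
  stmt15_general T k hT mu mu' p hmu hp heq
end
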